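/- arXiv:1907.03158 — 2 statements merged into one kernel-verified Lean document; each statement's English description precedes it below -/
import Mathlib

section
/- A minimum dominating set D of a tree T rooted at a vertex c is the (unique) highest γ-set of (T, c) if and only if every x ∈ D \ {c} has a child y with y ∈ pn(x, D). -/
/-!
If some `x ∈ D \ {c}` has no private child, each of its private neighbours is `x` itself or
its parent `p`, so exchanging `x` for `p` gives a γ-set of smaller height. Conversely, if each
`x ∈ D \ {c}` has a private child `yₓ`, a dominating set `F` meets every `N[yₓ]` in a vertex
at depth at least that of `x`. In a tree these closed neighbourhoods are pairwise disjoint, so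
this is an injection `D \ {c} → F` that does not decrease depth, and `ht(D) ≤ ht(F)`.
-/

open SimpleGraph Finset

/-- The closed neighbourhood of a vertex. -/
def closedNbhd {V : Type} (G : SimpleGraph V) (x : V) : Set V :=
  {y | y = x ∨ G.Adj x y}

/-- `D` is a dominating set of `G`. -/
def isDomSet {V : Type} [Fintype V] [DecidableEq V] (G : SimpleGraph V) (D : Finset V) : Prop :=
  ∀ v : V, ∃ d ∈ D, v ∈ closedNbhd G d

/-- `D` is a minimum dominating set (γ-set) of `G`. -/
def isMinDomSet {V : Type} [Fintype V] [DecidableEq V] (G : SimpleGraph V) (D : Finset V) : Prop :=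
  isDomSet G D ∧ ∀ D' : Finset V, isDomSet G D' → D.card ≤ D'.card

/-- The set of `D`-private neighbours of `x`: vertices in `N[x]` not in the closed
neighbourhood of any other vertex of `D`. -/
def privN {V : Type} [Fintype V] [DecidableEq V] (G : SimpleGraph V) (D : Finset V) (x : V) :
    Set V :=
  {y | y ∈ closedNbhd G x ∧ ∀ z ∈ D, z ≠ x → y ∉ closedNbhd G z}

/-- The γ-graph of `G`: vertices are the γ-sets of `G`, two γ-sets adjacent iff they differ
by a swap of two adjacent vertices. -/
def gammaGraph {V : Type} [Fintype V] [DecidableEq V] (G : SimpleGraph V) :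
    SimpleGraph {D : Finset V // isMinDomSet G D} where
  Adj D₁ D₂ := D₁ ≠ D₂ ∧ ∃ u v : V, G.Adj u v ∧
    (D₂.1 = (D₁.1 \ {u}) ∪ {v} ∨ D₁.1 = (D₂.1 \ {u}) ∪ {v})
  symm := by
    constructor
    rintro D₁ D₂ ⟨hne, u, v, huv, h | h⟩
    · exact ⟨hne.symm, u, v, huv, Or.inr h⟩
    · exact ⟨hne.symm, u, v, huv, Or.inl h⟩
  loopless := by constructor; rintro D ⟨hne, -⟩; exact hne rfl


namespace SimpleGraph

variable {V : Type} {G : SimpleGraph V}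

lemma Walk.dist_le_of_mem_support {u v w : V} (p : G.Walk u v)
    (hp : p.length = G.dist u v) (hw : w ∈ p.support) : G.dist w v ≤ G.dist u v := by
  classical
  exact (dist_le _).trans (hp ▸ p.length_dropUntil_le_length hw)

lemma Connected.exists_adj_dist_eq_add_one (hG : G.Connected) {x c : V} (hxc : x ≠ c) :
    ∃ p, G.Adj x p ∧ G.dist x c = G.dist p c + 1 := by
  obtain ⟨w, hw⟩ := hG.exists_walk_length_eq_dist x c
  cases w with
  | nil => exact absurd rfl hxc
  | @cons _ p _ hxp q =>
    have hq : G.dist p c ≤ q.length := dist_le q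
    have htri : G.dist x c ≤ G.dist x p + G.dist p c := hG.dist_triangle
    rw [dist_eq_one_iff_adj.2 hxp] at htri
    rw [Walk.length_cons] at hw
    exact ⟨p, hxp, by omega⟩

lemma dist_le_dist_add_one_of_mem_closedNbhd {c y w : V} (h : y ∈ closedNbhd G w) :
    G.dist y c ≤ G.dist w c + 1 := by
  rcases h with rfl | h
  · exact Nat.le_succ _
  · rw [dist_comm, dist_comm (u := w)]
    rcases h.diff_dist_adj (u := c) with h | h | h <;> omega

lemma IsTree.dist_eq_add_one_of_adj (hG : G.IsTree) (c : V) {x y : V} (h : G.Adj x y) :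
    G.dist y c = G.dist x c + 1 ∨ G.dist x c = G.dist y c + 1 := by
  simpa only [dist_comm] using hG.dist_eq_dist_add_one_of_adj c h.symm

lemma IsTree.eq_of_adj_of_dist_lt (hG : G.IsTree) {c y y' w : V}
    (hy : G.Adj y w) (hy' : G.Adj y' w) (hyw : G.dist y c < G.dist w c)
    (hy'w : G.dist y' c < G.dist w c) : y = y' := by
  obtain ⟨p, hp, hpl⟩ := hG.connected.exists_path_of_dist y c
  obtain ⟨p', hp', hp'l⟩ := hG.connected.exists_path_of_dist y' c
  have hq := hp.cons (h := hy.symm) fun hw => (p.dist_le_of_mem_support hpl hw).not_gt hyw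
  have hq' := hp'.cons (h := hy'.symm) fun hw => (p'.dist_le_of_mem_support hp'l hw).not_gt hy'w
  have := congrArg (fun q : G.Path w c => q.1.snd)
    ((hG.isAcyclic.subsingleton_path w c).elim ⟨_, hq⟩ ⟨_, hq'⟩)
  simpa using this

lemma IsTree.eq_or_eq_or_child_of_mem_closedNbhd (hG : G.IsTree) (c : V)
    {x y w : V} (hxy : G.Adj x y) (hlt : G.dist x c < G.dist y c) (hw : w ∈ closedNbhd G y) :
    w = x ∨ w = y ∨ (G.Adj y w ∧ G.dist y c < G.dist w c) := by
  rcases hw with rfl | hyw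
  · exact Or.inr (Or.inl rfl)
  rcases hG.dist_eq_add_one_of_adj c hyw with h | h
  · exact Or.inr (Or.inr ⟨hyw, by omega⟩)
  · exact Or.inl (hG.eq_of_adj_of_dist_lt hyw.symm hxy (by omega) hlt)

end SimpleGraph

section Domination

variable {V : Type} {G : SimpleGraph V}

lemma mem_closedNbhd_comm {x v : V} : v ∈ closedNbhd G x ↔ x ∈ closedNbhd G v :=
  ⟨fun h => h.imp Eq.symm Adj.symm, fun h => h.imp Eq.symm Adj.symm⟩

variable [Fintype V] [DecidableEq V]

lemma isDomSet_insert_erase {D : Finset V} {x p : V} (hD : isDomSet G D)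
    (h : privN G D x ⊆ closedNbhd G p) : isDomSet G (insert p (D.erase x)) := by
  intro v
  by_cases hv : v ∈ privN G D x
  · exact ⟨p, mem_insert_self _ _, h hv⟩
  obtain ⟨d, hd, hvd⟩ := hD v
  by_cases hdx : d = x
  · subst hdx
    simp only [privN, Set.mem_ofPred_eq, not_and, not_forall, not_not] at hv
    obtain ⟨z, hz, hzd, hvz⟩ := hv hvd
    exact ⟨z, mem_insert_of_mem (mem_erase.2 ⟨hzd, hz⟩), hvz⟩
  · exact ⟨d, mem_insert_of_mem (mem_erase.2 ⟨hdx, hd⟩), hvd⟩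

lemma isMinDomSet.insert_erase {D : Finset V} {x p : V} (hD : isMinDomSet G D) (hx : x ∈ D)
    (hpx : p ≠ x) (h : isDomSet G (insert p (D.erase x))) :
    p ∉ D ∧ isMinDomSet G (insert p (D.erase x)) := by
  have hcard : (D.erase x).card + 1 = D.card := card_erase_add_one hx
  have hp : p ∉ D := by
    intro hpD
    rw [insert_eq_of_mem (mem_erase.2 ⟨hpx, hpD⟩)] at h
    have := hD.2 _ h
    omega
  have hcard' : (insert p (D.erase x)).card = D.card := by
    rw [card_insert_of_notMem fun h => hp (mem_of_mem_erase h), hcard]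
  exact ⟨hp, h, fun F hF => hcard' ▸ hD.2 F hF⟩

end Domination

namespace SimpleGraph

variable {V : Type} [Fintype V] [DecidableEq V] {G : SimpleGraph V}

lemma IsTree.privN_subset_closedNbhd_of_forall_child_notMem (hG : G.IsTree) (c : V)
    {D : Finset V} {x p : V} (hxp : G.Adj x p) (hpx : G.dist p c < G.dist x c)
    (hx : ∀ y, G.Adj x y → G.dist x c < G.dist y c → y ∉ privN G D x) :
    privN G D x ⊆ closedNbhd G p := by
  rintro v hv
  rcases hv.1 with rfl | hxv
  · exact Or.inr hxp.symm
  rcases hG.dist_eq_add_one_of_adj c hxv with h | h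
  · exact absurd hv (hx v hxv (by omega))
  · exact Or.inl (hG.eq_of_adj_of_dist_lt hxv.symm hxp.symm (by omega) hpx)

lemma IsTree.disjoint_closedNbhd_of_mem_privN (hG : G.IsTree) (c : V) {D : Finset V}
    {a b ya yb : V} (ha : a ∈ D) (hb : b ∈ D) (hab : a ≠ b)
    (hya : G.Adj a ya) (hlta : G.dist a c < G.dist ya c) (hpa : ya ∈ privN G D a)
    (hyb : G.Adj b yb) (hltb : G.dist b c < G.dist yb c) (hpb : yb ∈ privN G D b) :
    Disjoint (closedNbhd G ya) (closedNbhd G yb) := by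
  have hna : yb ∉ closedNbhd G a := hpb.2 a ha hab
  have hnb : ya ∉ closedNbhd G b := hpa.2 b hb hab.symm
  rw [Set.disjoint_left]
  intro w hwa hwb
  rcases hG.eq_or_eq_or_child_of_mem_closedNbhd c hya hlta hwa with rfl | rfl | ⟨hwa, hwa'⟩
  · exact hna (mem_closedNbhd_comm.1 hwb)
  · rcases hG.eq_or_eq_or_child_of_mem_closedNbhd c hyb hltb hwb with rfl | rfl | ⟨hwb, hwb'⟩
    · exact hnb (Or.inl rfl)
    · exact hnb (Or.inr hyb)
    · exact hna (Or.inl (hG.eq_of_adj_of_dist_lt hwb hya hwb' hlta))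
  · rcases hG.eq_or_eq_or_child_of_mem_closedNbhd c hyb hltb hwb with rfl | rfl | ⟨hwb, hwb'⟩
    · exact hnb (Or.inr hwa.symm)
    · exact hnb (Or.inl (hG.eq_of_adj_of_dist_lt hwa hyb hwa' hltb))
    · exact hnb (Or.inr (hG.eq_of_adj_of_dist_lt hwa hwb hwa' hwb' ▸ hyb))

lemma IsTree.exists_privN_child_of_forall_sum_dist_le (hG : G.IsTree) (c : V) {D : Finset V}
    (hD : isMinDomSet G D)
    (hhigh : ∀ F, isMinDomSet G F → ∑ x ∈ D, G.dist x c ≤ ∑ x ∈ F, G.dist x c)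
    {x : V} (hxD : x ∈ D) (hxc : x ≠ c) :
    ∃ y, G.Adj x y ∧ G.dist x c < G.dist y c ∧ y ∈ privN G D x := by
  by_contra! hno
  obtain ⟨p, hxp, hdist⟩ := hG.connected.exists_adj_dist_eq_add_one hxc
  have hdom := isDomSet_insert_erase hD.1
    (hG.privN_subset_closedNbhd_of_forall_child_notMem c hxp (by omega) hno)
  obtain ⟨hpD, hmin⟩ := hD.insert_erase hxD hxp.ne' hdom
  have hle := hhigh _ hmin
  rw [sum_insert fun h => hpD (mem_of_mem_erase h)] at hle
  have := sum_erase_add D (fun v => G.dist v c) hxD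
  omega

lemma IsTree.sum_dist_le_of_forall_exists_privN_child (hG : G.IsTree) (c : V) {D F : Finset V}
    (hD : ∀ x ∈ D, x ≠ c → ∃ y, G.Adj x y ∧ G.dist x c < G.dist y c ∧ y ∈ privN G D x)
    (hF : isDomSet G F) : ∑ x ∈ D, G.dist x c ≤ ∑ x ∈ F, G.dist x c := by
  choose! y hadj hlt hpriv using hD
  choose f hfF hf using hF
  have hle : ∀ x ∈ D.erase c, G.dist x c ≤ G.dist (f (y x)) c := by
    intro x hx
    obtain ⟨hxc, hxD⟩ := mem_erase.1 hx
    have := hG.dist_eq_add_one_of_adj c (hadj x hxD hxc)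
    have := dist_le_dist_add_one_of_mem_closedNbhd (c := c) (hf (y x))
    have := hlt x hxD hxc
    omega
  have hinj : Set.InjOn (fun x => f (y x)) (D.erase c) := by
    intro a ha b hb hab
    obtain ⟨hac, haD⟩ := mem_erase.1 ha
    obtain ⟨hbc, hbD⟩ := mem_erase.1 hb
    by_contra hne
    refine Set.disjoint_left.1 (hG.disjoint_closedNbhd_of_mem_privN c haD hbD hne
      (hadj a haD hac) (hlt a haD hac) (hpriv a haD hac)
      (hadj b hbD hbc) (hlt b hbD hbc) (hpriv b hbD hbc)) (mem_closedNbhd_comm.1 (hf (y a))) ?_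
    exact (show f (y a) = f (y b) from hab) ▸ mem_closedNbhd_comm.1 (hf (y b))
  calc ∑ x ∈ D, G.dist x c = ∑ x ∈ D.erase c, G.dist x c :=
        (sum_erase D (f := (G.dist · c)) dist_self).symm
    _ ≤ ∑ x ∈ D.erase c, G.dist (f (y x)) c := sum_le_sum hle
    _ = ∑ z ∈ (D.erase c).image (fun x => f (y x)), G.dist z c := (sum_image (f := (G.dist · c)) hinj).symm
    _ ≤ ∑ z ∈ F, G.dist z c := sum_le_sum_of_subset (image_subset_iff.2 fun x _ => hfF _)

end SimpleGraph

theorem stmt6 {V : Type} [Fintype V] [DecidableEq V] (T : SimpleGraph V) (hT : T.IsTree)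
    (c : V) (D : Finset V) (hD : isMinDomSet T D) :
    (∀ F : Finset V, isMinDomSet T F →
        ∑ x ∈ D, T.dist x c ≤ ∑ x ∈ F, T.dist x c) ↔
      (∀ x ∈ D, x ≠ c →
        ∃ y : V, T.Adj x y ∧ T.dist x c < T.dist y c ∧ y ∈ privN T D x) :=
  ⟨fun hhigh _ hxD hxc => hT.exists_privN_child_of_forall_sum_dist_le c hD hhigh hxD hxc,
    fun hchild _ hF => hT.sum_dist_le_of_forall_exists_privN_child c hchild hF.1⟩
end

section
/- Let T be a tree and let S be a minimum dominating set of T, and let L₁, …, L_k (k ≥ 1) be γ-sets each adjacent in T(γ) to S and each of degree one in T(γ), with deg_{T(γ)}(S) ≥ 3. Then there exists a single vertex x ∈ S and vertices y₁, …, y_k ∉ S with x adjacent to each yᵢ and Lᵢ = (S \ {x}) ∪ {yᵢ} for all i. -/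
open SimpleGraph Finset

/-! Write each leaf as `Lᵢ = (S \ {xᵢ}) ∪ {yᵢ}`. In a tree, a swap `x ↦ y` that keeps `S`
dominating confines the `S`-private neighbours of `x` to `{x, y}`. A leaf `L` of the γ-graph
admits no swap other than the one back to `S`; hence whenever another vertex `u` of `S` could be
swapped for `w`, some `L`-private neighbour of `u` lies outside `N[w]`, and it is a common
neighbour of `u` and `x` outside `S`.

Suppose two leaves used vertices `x₁ ≠ x₂`, and let `(S \ {a}) ∪ {b}` be a third neighbour of
`S`. If `a ∉ {x₁, x₂}`, the common neighbours of the pairs among `x₁, x₂, a` close a 6-cycle.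
If `a = x₁`, then `b ≠ y₁`, so `x₁` is its own only private neighbour; but then `L₂` could swap
`x₁` for the common neighbour of `x₁` and `x₂`, giving the leaf `L₂` a second neighbour. -/

lemma Set.exists_mem_ne_ne_of_two_lt_ncard {α : Type*} {s : Set α} (hs : 2 < s.ncard) (a b : α) :
    ∃ c ∈ s, c ≠ a ∧ c ≠ b := by
  have hsa : 1 < (s \ {a}).ncard := by
    have := Set.pred_ncard_le_ncard_sdiff_singleton s a
    omega
  obtain ⟨c, ⟨hcs, hca⟩, hcb⟩ := Set.exists_ne_of_one_lt_ncard hsa b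
  exact ⟨c, hcs, hca, hcb⟩

namespace SimpleGraph

lemma eq_of_adj_of_ncard_neighborSet_eq_one {W : Type*} {H : SimpleGraph W} {v a b : W}
    (hv : (H.neighborSet v).ncard = 1) (ha : H.Adj v a) (hb : H.Adj v b) : a = b := by
  obtain ⟨c, hc⟩ := Set.ncard_eq_one.mp hv
  have ha' : a ∈ H.neighborSet v := ha
  have hb' : b ∈ H.neighborSet v := hb
  rw [hc, Set.mem_singleton_iff] at ha' hb'
  exact ha'.trans hb'.symm

namespace IsAcyclic

variable {V : Type} {G : SimpleGraph V}

lemma eq_of_isPath (hG : G.IsAcyclic) {u v : V} {p q : G.Walk u v} (hp : p.IsPath)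
    (hq : q.IsPath) : p = q :=
  haveI := hG.subsingleton_path u v
  congrArg Subtype.val (Subsingleton.elim (⟨p, hp⟩ : G.Path u v) ⟨q, hq⟩)

lemma not_adj_of_adj_of_adj (hG : G.IsAcyclic) {a b c : V} (hab : G.Adj a b)
    (hbc : G.Adj b c) : ¬G.Adj a c := fun hac => by
  have h := congrArg Walk.length <| hG.eq_of_isPath
    (p := .cons hac .nil) (q := .cons hab (.cons hbc .nil))
    (by simp [hac.ne]) (by simp [Walk.cons_isPath_iff, hab.ne, hbc.ne, hac.ne])
  simp at h

lemma eq_of_adj_of_adj (hG : G.IsAcyclic) {a b p q : V} (hab : a ≠ b) (hap : G.Adj a p)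
    (hpb : G.Adj p b) (haq : G.Adj a q) (hqb : G.Adj q b) : p = q := by
  have h := congrArg Walk.support <| hG.eq_of_isPath
    (p := .cons hap (.cons hpb .nil)) (q := .cons haq (.cons hqb .nil))
    (by simp [Walk.cons_isPath_iff, hap.ne, hpb.ne, hab])
    (by simp [Walk.cons_isPath_iff, haq.ne, hqb.ne, hab])
  simpa using h

end IsAcyclic

end SimpleGraph

lemma Finset.card_swap {V : Type} [DecidableEq V] {D : Finset V} {u w : V} (hu : u ∈ D)
    (hw : w ∉ D) : ((D \ {u}) ∪ {w}).card = D.card := by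
  rw [card_union_of_disjoint (disjoint_singleton_right.mpr fun h => hw (mem_sdiff.mp h).1),
    card_singleton, sdiff_singleton_eq_erase, card_erase_add_one hu]

lemma Finset.mem_and_notMem_of_eq_swap {V : Type} [DecidableEq V] {D L : Finset V} {u w : V}
    (hcard : L.card = D.card) (hne : D ≠ L) (e : L = (D \ {u}) ∪ {w}) :
    u ∈ D ∧ w ∉ D := by
  subst e
  constructor
  · by_contra hu
    refine hne (eq_of_subset_of_card_le (fun z hz => ?_) hcard.le)
    simp [hz, ne_of_mem_of_not_mem hz hu]
  · intro hw
    refine hne (eq_of_subset_of_card_le (fun z hz => ?_) hcard.ge).symm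
    aesop

section Domination

variable {V : Type} [Fintype V] [DecidableEq V] {G : SimpleGraph V}

lemma isMinDomSet.card_eq {D D' : Finset V} (hD : isMinDomSet G D) (hD' : isMinDomSet G D') :
    D.card = D'.card :=
  le_antisymm (hD.2 D' hD'.1) (hD'.2 D hD.1)

lemma isDomSet_swap {D : Finset V} {u w : V} (hD : isDomSet G D)
    (hpn : ∀ p ∈ privN G D u, p ∈ closedNbhd G w) : isDomSet G ((D \ {u}) ∪ {w}) := by
  intro t
  by_cases hother : ∃ z ∈ D, z ≠ u ∧ t ∈ closedNbhd G z
  · obtain ⟨z, hz, hzu, htz⟩ := hother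
    exact ⟨z, by simp [hz, hzu], htz⟩
  · push Not at hother
    obtain ⟨d, hd, htd⟩ := hD t
    obtain rfl : d = u := by
      by_contra hdu
      exact hother d hd hdu htd
    exact ⟨w, by simp, hpn t ⟨htd, hother⟩⟩

lemma notMem_of_forall_privN_mem {D : Finset V} {u w : V} (hD : isMinDomSet G D) (hu : u ∈ D)
    (huw : u ≠ w) (hpn : ∀ p ∈ privN G D u, p ∈ closedNbhd G w) : w ∉ D := by
  intro hw
  have hswap : (D \ {u}) ∪ {w} = D.erase u := by
    rw [sdiff_singleton_eq_erase]
    exact union_eq_left.mpr (singleton_subset_iff.mpr (mem_erase.mpr ⟨huw.symm, hw⟩))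
  have hle := hD.2 _ (isDomSet_swap hD.1 hpn)
  rw [hswap] at hle
  exact (card_erase_lt_of_mem hu).not_ge hle

lemma isMinDomSet_swap {D : Finset V} {u w : V} (hD : isMinDomSet G D) (hu : u ∈ D)
    (huw : u ≠ w) (hpn : ∀ p ∈ privN G D u, p ∈ closedNbhd G w) :
    isMinDomSet G ((D \ {u}) ∪ {w}) :=
  ⟨isDomSet_swap hD.1 hpn, fun D' hD' =>
    (card_swap hu (notMem_of_forall_privN_mem hD hu huw hpn)).trans_le (hD.2 D' hD')⟩

/-- Any other private neighbour of `a` would be dominated by `b` and form a triangle with `a`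
and `b`. -/
lemma eq_or_eq_of_mem_privN (hG : G.IsAcyclic) {S : Finset V} {a b p : V} (hab : G.Adj a b)
    (hdom : isDomSet G ((S \ {a}) ∪ {b})) (hp : p ∈ privN G S a) : p = a ∨ p = b := by
  obtain ⟨hpa, hpriv⟩ := hp
  obtain ⟨d, hd, hpd⟩ := hdom p
  rcases mem_union.mp hd with hd | hd
  · obtain ⟨hdS, hda⟩ := mem_sdiff.mp hd
    exact absurd hpd (hpriv d hdS (by simpa using hda))
  · obtain rfl := mem_singleton.mp hd
    rcases hpa with rfl | hap
    · exact Or.inl rfl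
    rcases hpd with rfl | hdp
    · exact Or.inr rfl
    exact (hG.not_adj_of_adj_of_adj hab hdp hap).elim

lemma mem_closedNbhd_of_mem_privN (hG : G.IsAcyclic) {S : Finset V} {a b : V}
    (hab : G.Adj a b) (hdom : isDomSet G ((S \ {a}) ∪ {b})) :
    ∀ p ∈ privN G S a, p ∈ closedNbhd G b := by
  intro p hp
  rcases eq_or_eq_of_mem_privN hG hab hdom hp with rfl | rfl
  · exact Or.inr hab.symm
  · exact Or.inl rfl

end Domination

section GammaGraph

variable {V : Type} [Fintype V] [DecidableEq V] {G : SimpleGraph V}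

lemma gammaGraph_adj_of_eq_swap {D L : Finset V} (hD : isMinDomSet G D) (hL : isMinDomSet G L)
    {u w : V} (huw : G.Adj u w) (hw : w ∉ D) (e : L = (D \ {u}) ∪ {w}) :
    (gammaGraph G).Adj ⟨D, hD⟩ ⟨L, hL⟩ := by
  refine ⟨fun h => hw ?_, u, w, huw, Or.inl e⟩
  rw [show D = L from congrArg Subtype.val h, e]
  simp

lemma exists_swap_of_gammaGraph_adj {D L : Finset V} {hD : isMinDomSet G D}
    {hL : isMinDomSet G L} (h : (gammaGraph G).Adj ⟨D, hD⟩ ⟨L, hL⟩) :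
    ∃ u ∈ D, ∃ w ∉ D, G.Adj u w ∧ L = (D \ {u}) ∪ {w} := by
  obtain ⟨hne, u, w, huw, e | e⟩ := h
  · have e : L = (D \ {u}) ∪ {w} := e
    obtain ⟨hu, hw⟩ :=
      Finset.mem_and_notMem_of_eq_swap (hL.card_eq hD) (fun h => hne (Subtype.ext h)) e
    exact ⟨u, hu, w, hw, huw, e⟩
  · have e : D = (L \ {u}) ∪ {w} := e
    obtain ⟨hu, hw⟩ :=
      Finset.mem_and_notMem_of_eq_swap (hD.card_eq hL) (fun h => hne (Subtype.ext h.symm)) e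
    subst e
    refine ⟨w, by simp, u, by simp [huw.ne], huw.symm, ?_⟩
    ext z
    by_cases hzu : z = u <;> by_cases hzw : z = w <;> aesop

lemma swap_eq_of_ncard_neighborSet_eq_one {D L : Finset V} (hD : isMinDomSet G D)
    (hL : isMinDomSet G L) (hleaf : ((gammaGraph G).neighborSet ⟨L, hL⟩).ncard = 1)
    (hLD : (gammaGraph G).Adj ⟨L, hL⟩ ⟨D, hD⟩) {u w : V} (hu : u ∈ L) (huw : G.Adj u w)
    (hpn : ∀ p ∈ privN G L u, p ∈ closedNbhd G w) : (L \ {u}) ∪ {w} = D :=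
  congrArg Subtype.val <| (gammaGraph G).eq_of_adj_of_ncard_neighborSet_eq_one hleaf
    (gammaGraph_adj_of_eq_swap hL (isMinDomSet_swap hL hu huw.ne hpn) huw
      (notMem_of_forall_privN_mem hL hu huw.ne hpn) rfl) hLD

lemma exists_mem_privN_notMem_closedNbhd {D L : Finset V} (hD : isMinDomSet G D)
    (hL : isMinDomSet G L) (hleaf : ((gammaGraph G).neighborSet ⟨L, hL⟩).ncard = 1)
    (hLD : (gammaGraph G).Adj ⟨L, hL⟩ ⟨D, hD⟩) {u w : V} (hu : u ∈ L) (huD : u ∈ D)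
    (huw : G.Adj u w) : ∃ p ∈ privN G L u, p ∉ closedNbhd G w := by
  by_contra! hpn
  rw [← swap_eq_of_ncard_neighborSet_eq_one hD hL hleaf hLD hu huw hpn] at huD
  simp [huw.ne] at huD

end GammaGraph

structure IsLeafSwap {V : Type} [Fintype V] [DecidableEq V] (G : SimpleGraph V)
    (S L : Finset V) (x y : V) : Prop where
  minDom : isMinDomSet G L
  leaf : ((gammaGraph G).neighborSet ⟨L, minDom⟩).ncard = 1
  mem : x ∈ S
  notMem : y ∉ S
  adj : G.Adj x y
  eq : L = (S \ {x}) ∪ {y}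

namespace IsLeafSwap

variable {V : Type} [Fintype V] [DecidableEq V] {G : SimpleGraph V} {S L L₁ L₂ : Finset V}
  {x y x₁ y₁ x₂ y₂ : V}

lemma mem_of_mem (h : IsLeafSwap G S L x y) {z : V} (hz : z ∈ S) (hzx : z ≠ x) : z ∈ L := by
  rw [h.eq]
  simp [hz, hzx]

lemma mem_right (h : IsLeafSwap G S L x y) : y ∈ L := by
  rw [h.eq]
  simp

lemma gammaGraph_adj (hS : isMinDomSet G S) (h : IsLeafSwap G S L x y) :
    (gammaGraph G).Adj ⟨L, h.minDom⟩ ⟨S, hS⟩ :=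
  (gammaGraph_adj_of_eq_swap hS h.minDom h.adj h.notMem h.eq).symm

/-- `L` admits no swap besides the one back to `S`, so some `L`-private neighbour of `u` escapes
`N[w]`; it can only have lost its `S`-privacy to `x`. -/
lemma exists_adj_adj_mem_privN (hS : isMinDomSet G S) (h : IsLeafSwap G S L x y) {u w : V}
    (hu : u ∈ S) (hux : u ≠ x) (huw : G.Adj u w)
    (hpn : ∀ p ∈ privN G S u, p ∈ closedNbhd G w) :
    ∃ v ∉ S, G.Adj u v ∧ G.Adj x v ∧ v ∈ privN G L u := by
  obtain ⟨v, hv, hvw⟩ := exists_mem_privN_notMem_closedNbhd hS h.minDom h.leaf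
    (h.gammaGraph_adj hS) (h.mem_of_mem hu hux) hu huw
  have hvu : v ≠ u := by
    rintro rfl
    exact hvw (Or.inr huw.symm)
  have hvx : v ≠ x := by
    rintro rfl
    exact hv.2 y h.mem_right (ne_of_mem_of_not_mem hu h.notMem).symm (Or.inr h.adj.symm)
  have hvNx : v ∈ closedNbhd G x := by
    by_contra hvNx
    refine hvw (hpn v ⟨hv.1, fun z hz hzu => ?_⟩)
    by_cases hzx : z = x
    · exact hzx ▸ hvNx
    · exact hv.2 z (h.mem_of_mem hz hzx) hzu
  refine ⟨v, fun hvS => hv.2 v (h.mem_of_mem hvS hvx) hvu (Or.inl rfl),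
    hv.1.resolve_left hvu, hvNx.resolve_left hvx, hv⟩

lemma mem_closedNbhd_of_mem_privN (hG : G.IsAcyclic) (h : IsLeafSwap G S L x y) :
    ∀ p ∈ privN G S x, p ∈ closedNbhd G y :=
  _root_.mem_closedNbhd_of_mem_privN hG h.adj (h.eq ▸ h.minDom.1)

/-- `exists_adj_adj_mem_privN` gives a common neighbour `v` of `x₁` and `x₂`; if `x₁` had no
private neighbour besides itself, the leaf `L₂` could also swap `x₁` for `v`. -/
lemma exists_mem_privN_ne (hG : G.IsAcyclic) (hS : isMinDomSet G S)
    (h₁ : IsLeafSwap G S L₁ x₁ y₁) (h₂ : IsLeafSwap G S L₂ x₂ y₂) (hne : x₁ ≠ x₂) :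
    ∃ p ∈ privN G S x₁, p ≠ x₁ := by
  obtain ⟨v, -, hx₂v, hx₁v, -⟩ := h₁.exists_adj_adj_mem_privN hS h₂.mem hne.symm h₂.adj
    (h₂.mem_closedNbhd_of_mem_privN hG)
  by_contra! hpriv
  obtain ⟨p, hp, hpv⟩ := exists_mem_privN_notMem_closedNbhd hS h₂.minDom h₂.leaf
    (h₂.gammaGraph_adj hS) (h₂.mem_of_mem h₁.mem hne) h₁.mem hx₁v
  refine hpv ?_
  by_cases hpx₂ : p ∈ closedNbhd G x₂
  · rcases hp.1 with rfl | hx₁p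
    · exact Or.inr hx₁v.symm
    rcases hpx₂ with rfl | hx₂p
    · exact Or.inr hx₂v.symm
    exact Or.inl (hG.eq_of_adj_of_adj hne hx₁p hx₂p.symm hx₁v hx₂v.symm)
  · rw [hpriv p ⟨hp.1, fun z hz hzx => ?_⟩]
    · exact Or.inr hx₁v.symm
    by_cases hzx₂ : z = x₂
    · exact hzx₂ ▸ hpx₂
    · exact hp.2 z (h₂.mem_of_mem hz hzx₂) hzx

lemma eq_of_isDomSet_swap (hG : G.IsAcyclic) (hS : isMinDomSet G S)
    (h₁ : IsLeafSwap G S L₁ x₁ y₁) (h₂ : IsLeafSwap G S L₂ x₂ y₂) (hne : x₁ ≠ x₂) {b : V}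
    (hb : G.Adj x₁ b) (hdom : isDomSet G ((S \ {x₁}) ∪ {b})) : L₁ = (S \ {x₁}) ∪ {b} := by
  obtain ⟨p, hp, hpx⟩ := h₁.exists_mem_privN_ne hG hS h₂ hne
  have hpy : p = y₁ := (eq_or_eq_of_mem_privN hG h₁.adj (h₁.eq ▸ h₁.minDom.1) hp).resolve_left hpx
  have hpb : p = b := (eq_or_eq_of_mem_privN hG hb hdom hp).resolve_left hpx
  rw [h₁.eq, ← hpy, hpb]

/-- A swap at a third vertex `a` would close a 6-cycle `x₁ v x₂ v₂ a v₁` of common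
neighbours. -/
lemma eq_or_eq_of_forall_privN_mem (hG : G.IsAcyclic) (hS : isMinDomSet G S)
    (h₁ : IsLeafSwap G S L₁ x₁ y₁) (h₂ : IsLeafSwap G S L₂ x₂ y₂) (hne : x₁ ≠ x₂) {a b : V}
    (ha : a ∈ S) (hab : G.Adj a b) (hpn : ∀ p ∈ privN G S a, p ∈ closedNbhd G b) :
    a = x₁ ∨ a = x₂ := by
  by_contra! hax
  obtain ⟨v, -, hx₂v, hx₁v, -⟩ := h₁.exists_adj_adj_mem_privN hS h₂.mem hne.symm h₂.adj
    (h₂.mem_closedNbhd_of_mem_privN hG)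
  obtain ⟨v₁, hv₁S, hav₁, hx₁v₁, -⟩ := h₁.exists_adj_adj_mem_privN hS ha hax.1 hab hpn
  obtain ⟨v₂, hv₂S, hav₂, hx₂v₂, hv₂⟩ := h₂.exists_adj_adj_mem_privN hS ha hax.2 hab hpn
  have hx₁v₂ : ¬G.Adj x₁ v₂ := fun h =>
    hv₂.2 x₁ (h₂.mem_of_mem h₁.mem hne) (Ne.symm hax.1) (Or.inr h)
  have hv₁v₂ : v₁ ≠ v₂ := by
    rintro rfl
    exact hx₁v₂ hx₁v₁
  have hlen := congrArg Walk.length <| hG.eq_of_isPath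
    (p := .cons hx₁v (.cons hx₂v.symm .nil))
    (q := .cons hx₁v₁ (.cons hav₁.symm (.cons hav₂ (.cons hx₂v₂.symm .nil))))
    (by simp [Walk.cons_isPath_iff, hx₁v.ne, hx₂v.ne', hne])
    (by simp [Walk.cons_isPath_iff, hx₁v₁.ne, hav₁.ne', hav₂.ne, hx₂v₂.ne', hne, hv₁v₂,
      Ne.symm hax.1, hax.2, ne_of_mem_of_not_mem h₁.mem hv₂S,
      (ne_of_mem_of_not_mem h₂.mem hv₁S).symm])
  simp at hlen

lemma fst_eq (hG : G.IsAcyclic) (hS : isMinDomSet G S) (h₁ : IsLeafSwap G S L₁ x₁ y₁)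
    (h₂ : IsLeafSwap G S L₂ x₂ y₂) (hdeg : 3 ≤ ((gammaGraph G).neighborSet ⟨S, hS⟩).ncard) :
    x₁ = x₂ := by
  by_contra hne
  obtain ⟨⟨M, hM⟩, hSM, hM₁, hM₂⟩ :=
    Set.exists_mem_ne_ne_of_two_lt_ncard hdeg ⟨L₁, h₁.minDom⟩ ⟨L₂, h₂.minDom⟩
  obtain ⟨a, ha, b, -, hab, rfl⟩ := exists_swap_of_gammaGraph_adj hSM
  rcases h₁.eq_or_eq_of_forall_privN_mem hG hS h₂ hne ha hab
    (_root_.mem_closedNbhd_of_mem_privN hG hab hM.1) with rfl | rfl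
  · exact hM₁ (Subtype.ext (h₁.eq_of_isDomSet_swap hG hS h₂ hne hab hM.1).symm)
  · exact hM₂ (Subtype.ext (h₂.eq_of_isDomSet_swap hG hS h₁ (Ne.symm hne) hab hM.1).symm)

end IsLeafSwap

theorem stmt11 {V : Type} [Fintype V] [DecidableEq V] (T : SimpleGraph V) (hT : T.IsTree)
    (S : Finset V) (hS : isMinDomSet T S)
    (k : ℕ) (hk : 1 ≤ k) (L : Fin k → Finset V) (hL : ∀ i, isMinDomSet T (L i))
    (hadj : ∀ i, (gammaGraph T).Adj ⟨S, hS⟩ ⟨L i, hL i⟩)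
    (hleaf : ∀ i, ((gammaGraph T).neighborSet ⟨L i, hL i⟩).ncard = 1)
    (hdeg : 3 ≤ ((gammaGraph T).neighborSet ⟨S, hS⟩).ncard) :
    ∃ x ∈ S, ∃ y : Fin k → V,
      ∀ i, y i ∉ S ∧ T.Adj x (y i) ∧ L i = (S \ {x}) ∪ {y i} := by
  choose x hx y hy hxy hLxy using fun i => exists_swap_of_gammaGraph_adj (hadj i)
  have hswap : ∀ i, IsLeafSwap T S (L i) (x i) (y i) :=
    fun i => ⟨hL i, hleaf i, hx i, hy i, hxy i, hLxy i⟩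
  let i₀ : Fin k := ⟨0, hk⟩
  refine ⟨x i₀, hx i₀, y, fun i => ?_⟩
  have hxi : x i = x i₀ := (hswap i).fst_eq hT.isAcyclic hS (hswap i₀) hdeg
  exact ⟨hy i, hxi ▸ hxy i, hxi ▸ hLxy i⟩
end
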